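/- (Hadamard second variation formula.) Let n ≥ 1 and let A : ℝ → M_n(ℂ) be twice differentiable with A(t) Hermitian for every t. Suppose λ₁,…,λ_n : ℝ → ℝ are twice differentiable, v₁,…,v_n : ℝ → ℂⁿ are differentiable, A(t)v_i(t) = λ_i(t)v_i(t) for all t and i, the vectors v₁(t),…,v_n(t) are orthonormal for every t, and λ₁(t₀),…,λ_n(t₀) are pairwise distinct. Then for each i, λ_i''(t₀) = ⟨v_i(t₀), A''(t₀)v_i(t₀)⟩ + 2·Σ_{j≠i} |⟨v_j(t₀), A'(t₀)v_i(t₀)⟩|² / (λ_i(t₀) − λ_j(t₀)). -/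

import Mathlib

/-!
Differentiating `A vᵢ = λᵢ vᵢ` and pairing with the eigenvector `vⱼ` of the Hermitian `A`
gives `⟨vⱼ, A' vᵢ⟩ = λᵢ' ⟨vⱼ, vᵢ⟩ + (λᵢ - λⱼ) ⟨vⱼ, vᵢ'⟩`. For `j = i` this is the
Hellmann–Feynman formula `λᵢ' = ⟨vᵢ, A' vᵢ⟩`, valid at every time, and differentiating it once more
gives `λᵢ'' = ⟨vᵢ, A'' vᵢ⟩ + 2 Re ⟨vᵢ, A' vᵢ'⟩`. Expanding `vᵢ'` in the orthonormal basis `(vⱼ)`,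
the coefficients with `j ≠ i` are `⟨vⱼ, A' vᵢ⟩ / (λᵢ - λⱼ)`, while `⟨vᵢ, vᵢ'⟩` is purely imaginary
because `‖vᵢ‖ = 1`, so the `j = i` term drops out of the real part.
-/

open Matrix

theorem Matrix.IsHermitian.of_hasDerivAt {𝕜 n : Type*} [RCLike 𝕜] {t : ℝ}
    {A : ℝ → Matrix n n 𝕜} {A' : Matrix n n 𝕜} (hherm : ∀ s, (A s).IsHermitian)
    (hA : ∀ k l, HasDerivAt (fun s => A s k l) (A' k l) t) :
    A'.IsHermitian := by
  ext k l
  have hconj : HasDerivAt (fun s => A s k l) (star (A' l k)) t := by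
    simpa only [fun s => (hherm s).apply k l] using (hA l k).star
  exact hconj.unique (hA k l)

theorem Matrix.IsHermitian.star_dotProduct_mulVec {α n : Type*} [Fintype n] [CommSemiring α]
    [StarRing α] {A : Matrix n n α} (hA : A.IsHermitian) (x y : n → α) :
    star x ⬝ᵥ A *ᵥ y = star (A *ᵥ x) ⬝ᵥ y := by
  rw [dotProduct_mulVec, star_mulVec, hA.eq]

theorem sum_star_dotProduct_smul_of_orthonormal {R m : Type*} [CommRing R] [StarRing R]
    [Fintype m] [DecidableEq m] {V : m → m → R}
    (hV : ∀ i j, star (V i) ⬝ᵥ V j = if i = j then 1 else 0) (w : m → R) :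
    ∑ j, (star (V j) ⬝ᵥ w) • V j = w := by
  let U : Matrix m m R := .of fun k j => V j k
  have hUU : Uᴴ * U = 1 := by
    ext i j
    simpa [U, mul_apply, dotProduct, one_apply] using hV i j
  calc ∑ j, (star (V j) ⬝ᵥ w) • V j = U *ᵥ (Uᴴ *ᵥ w) := by
        ext k
        simp [U, mulVec, dotProduct, Finset.sum_apply, mul_comm]
    _ = w := by rw [mulVec_mulVec, mul_eq_one_comm.mp hUU, one_mulVec]

theorem add_star_sum_eq_two_mul_sum_erase {ι R : Type*} [Fintype ι] [DecidableEq ι] [Semiring R]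
    [StarRing R] (w : ι → R) {i : ι} (hi : w i + star (w i) = 0)
    (hreal : ∀ j ≠ i, star (w j) = w j) :
    ∑ j, w j + star (∑ j, w j) = 2 * ∑ j ∈ Finset.univ.erase i, w j := by
  rw [star_sum, ← Finset.sum_add_distrib, ← Finset.add_sum_erase _ _ (Finset.mem_univ i), hi,
    zero_add, Finset.mul_sum]
  refine Finset.sum_congr rfl fun j hj => ?_
  rw [hreal j (Finset.ne_of_mem_erase hj), two_mul]

theorem RCLike.star_mul_eq_ofReal_norm_sq_div {𝕜 : Type*} [RCLike 𝕜] {m c : 𝕜} {d : ℝ}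
    (hd : d ≠ 0) (h : m = d * c) : star m * c = ((‖m‖ ^ 2 / d : ℝ) : 𝕜) := by
  have hc : c = m / d := by rw [h]; field_simp [RCLike.ofReal_ne_zero.mpr hd]
  rw [hc, RCLike.star_def, ← mul_div_assoc, RCLike.conj_mul]
  norm_cast

section Calculus

variable {𝕜 : Type*} [RCLike 𝕜] {m : Type*} [Fintype m] {t : ℝ}

theorem HasDerivAt.star_dotProduct {f g : ℝ → m → 𝕜} {f' g' : m → 𝕜}
    (hf : HasDerivAt f f' t) (hg : HasDerivAt g g' t) :
    HasDerivAt (fun s => star (f s) ⬝ᵥ g s) (star f' ⬝ᵥ g t + star (f t) ⬝ᵥ g') t := by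
  have hf' := hasDerivAt_pi.mp hf.star
  have hg' := hasDerivAt_pi.mp hg
  simpa only [dotProduct, ← Finset.sum_add_distrib, add_comm (_ * g' _)] using
    HasDerivAt.fun_sum fun k _ => (hf' k).fun_mul (hg' k)

theorem HasDerivAt.matrix_mulVec {p : Type*} {M : ℝ → Matrix p m 𝕜} {M' : Matrix p m 𝕜}
    {g : ℝ → m → 𝕜} {g' : m → 𝕜}
    (hM : ∀ k l, HasDerivAt (fun s => M s k l) (M' k l) t) (hg : HasDerivAt g g' t) :
    HasDerivAt (fun s => M s *ᵥ g s) (M' *ᵥ g t + M t *ᵥ g') t := by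
  have hg' := hasDerivAt_pi.mp hg
  refine hasDerivAt_pi.mpr fun k => ?_
  simpa only [Pi.add_apply, mulVec, dotProduct, ← Finset.sum_add_distrib] using
    HasDerivAt.fun_sum fun l _ => (hM k l).fun_mul (hg' l)

theorem star_dotProduct_deriv_add_eq_zero {f : ℝ → m → 𝕜} {f' : m → 𝕜} {c : 𝕜}
    (hf : HasDerivAt f f' t) (hc : ∀ s, star (f s) ⬝ᵥ f s = c) :
    star f' ⬝ᵥ f t + star (f t) ⬝ᵥ f' = 0 :=
  (hf.star_dotProduct hf).unique (by simpa only [hc] using hasDerivAt_const t c)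

theorem HasDerivAt.star_dotProduct_mulVec_self {B : ℝ → Matrix m m 𝕜} {B' : Matrix m m 𝕜}
    {x : ℝ → m → 𝕜} {x' : m → 𝕜} (hB : ∀ k l, HasDerivAt (fun s => B s k l) (B' k l) t)
    (hBt : (B t).IsHermitian) (hx : HasDerivAt x x' t) :
    HasDerivAt (fun s => star (x s) ⬝ᵥ B s *ᵥ x s)
      (star (x t) ⬝ᵥ B' *ᵥ x t +
        (star (x t) ⬝ᵥ B t *ᵥ x' + star (star (x t) ⬝ᵥ B t *ᵥ x'))) t := by
  convert hx.star_dotProduct (HasDerivAt.matrix_mulVec hB hx) using 1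
  rw [dotProduct_add, hBt.star_dotProduct_mulVec x', Matrix.star_dotProduct (x t) (B t *ᵥ x'),
    star_star]
  ring

end Calculus

theorem star_dotProduct_mulVec_deriv_of_eigenvector {𝕜 n : Type*} [RCLike 𝕜] [Fintype n]
    {A : ℝ → Matrix n n 𝕜} {A' : Matrix n n 𝕜} {x : ℝ → n → 𝕜} {x' : n → 𝕜} {μ : ℝ → ℝ}
    {μ' t : ℝ}
    (hA : ∀ k l, HasDerivAt (fun s => A s k l) (A' k l) t) (hx : HasDerivAt x x' t)
    (hμ : HasDerivAt μ μ' t) (heig : ∀ s, A s *ᵥ x s = (μ s : 𝕜) • x s)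
    (hherm : (A t).IsHermitian) {y : n → 𝕜} {ν : ℝ} (hy : A t *ᵥ y = (ν : 𝕜) • y) :
    star y ⬝ᵥ A' *ᵥ x t = μ' * (star y ⬝ᵥ x t) + (μ t - ν) * (star y ⬝ᵥ x') := by
  have heig' : (fun s => A s *ᵥ x s) = fun s => μ s • x s := by
    funext s; rw [heig, RCLike.real_smul_eq_coe_smul (K := 𝕜)]
  have hderiv : A' *ᵥ x t + A t *ᵥ x' = μ t • x' + μ' • x t :=
    (HasDerivAt.matrix_mulVec hA hx).unique (heig' ▸ hμ.fun_smul hx)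
  have hsymm : star y ⬝ᵥ A t *ᵥ x' = ν * (star y ⬝ᵥ x') := by
    rw [hherm.star_dotProduct_mulVec, hy, star_smul, smul_dotProduct, RCLike.star_def,
      RCLike.conj_ofReal, smul_eq_mul]
  have := congrArg (star y ⬝ᵥ ·) hderiv
  simp only [dotProduct_add, dotProduct_smul, hsymm, RCLike.real_smul_eq_coe_smul (K := 𝕜),
    smul_eq_mul] at this
  linear_combination this

theorem stmt_17_general {n : ℕ}
    (A A' A'' : ℝ → Matrix (Fin n) (Fin n) ℂ)
    (hA : ∀ (t : ℝ) (i j : Fin n), HasDerivAt (fun s => A s i j) (A' t i j) t)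
    (hA' : ∀ (t : ℝ) (i j : Fin n), HasDerivAt (fun s => A' s i j) (A'' t i j) t)
    (hherm : ∀ t : ℝ, (A t).IsHermitian)
    (lam lam' lam'' : Fin n → ℝ → ℝ)
    (hlam : ∀ (i : Fin n) (t : ℝ), HasDerivAt (lam i) (lam' i t) t)
    (hlam' : ∀ (i : Fin n) (t : ℝ), HasDerivAt (lam' i) (lam'' i t) t)
    (v : Fin n → ℝ → Fin n → ℂ)
    (hv_diff : ∀ (i k : Fin n), Differentiable ℝ (fun t => v i t k))
    (heig : ∀ (i : Fin n) (t : ℝ), (A t).mulVec (v i t) = ((lam i t : ℝ) : ℂ) • v i t)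
    (horth : ∀ (t : ℝ) (i j : Fin n),
      star (v i t) ⬝ᵥ v j t = if i = j then 1 else 0)
    (t₀ : ℝ) (hdist : ∀ i j : Fin n, i ≠ j → lam i t₀ ≠ lam j t₀) :
    ∀ i : Fin n, ((lam'' i t₀ : ℝ) : ℂ) =
      star (v i t₀) ⬝ᵥ (A'' t₀).mulVec (v i t₀)
        + 2 * ∑ j ∈ Finset.univ.erase i,
            ((‖star (v j t₀) ⬝ᵥ (A' t₀).mulVec (v i t₀)‖ ^ 2
              / (lam i t₀ - lam j t₀) : ℝ) : ℂ) := by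
  intro i
  have hv (j : Fin n) (s : ℝ) : HasDerivAt (v j) (deriv (v j) s) s :=
    ((differentiable_pi.mpr (hv_diff j)) s).hasDerivAt
  have hfirst (j : Fin n) (s : ℝ) := star_dotProduct_mulVec_deriv_of_eigenvector (hA s)
    (hv i s) (hlam i s) (heig i) (hherm s) (heig j s)
  have hlam'_eq (s : ℝ) : star (v i s) ⬝ᵥ A' s *ᵥ v i s = lam' i s := by
    simpa [horth] using hfirst i s
  set m := fun j => star (v j t₀) ⬝ᵥ A' t₀ *ᵥ v i t₀
  set c := fun j => star (v j t₀) ⬝ᵥ deriv (v i) t₀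
  have hA't₀ : (A' t₀).IsHermitian := .of_hasDerivAt hherm (hA t₀)
  have hsecond := ((hv i t₀).star_dotProduct_mulVec_self (hA' t₀) hA't₀).unique
    (funext hlam'_eq ▸ (hlam' i t₀).ofReal_comp)
  have hexpand : star (v i t₀) ⬝ᵥ A' t₀ *ᵥ deriv (v i) t₀ = ∑ j, star (m j) * c j := by
    conv_lhs => rw [← sum_star_dotProduct_smul_of_orthonormal (horth t₀) (deriv (v i) t₀)]
    simp only [mulVec_sum, mulVec_smul, dotProduct_sum, dotProduct_smul, smul_eq_mul]
    refine Finset.sum_congr rfl fun j _ => ?_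
    rw [hA't₀.star_dotProduct_mulVec, Matrix.star_dotProduct (A' t₀ *ᵥ v i t₀), mul_comm]
  have hoff : ∀ j ≠ i, star (m j) * c j = ((‖m j‖ ^ 2 / (lam i t₀ - lam j t₀) : ℝ) : ℂ) :=
    fun j hj => RCLike.star_mul_eq_ofReal_norm_sq_div (sub_ne_zero.mpr (hdist i j hj.symm))
      (by simpa [horth, hj] using hfirst j t₀)
  have hdiag : star (m i) * c i + star (star (m i) * c i) = 0 := by
    have hskew := star_dotProduct_deriv_add_eq_zero (hv i t₀) fun s => horth s i i
    rw [Matrix.star_dotProduct (deriv (v i) t₀)] at hskew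
    simp only [Complex.star_def] at hskew
    simp only [m, c, hlam'_eq, star_mul', Complex.star_def, Complex.conj_ofReal]
    linear_combination (lam' i t₀ : ℂ) * hskew
  have hreal (j : Fin n) (hj : j ≠ i) : star (star (m j) * c j) = star (m j) * c j := by
    rw [hoff j hj]; exact RCLike.conj_ofReal _
  rw [← hsecond, hexpand, add_star_sum_eq_two_mul_sum_erase (fun j => star (m j) * c j) hdiag hreal]
  congr 2
  exact Finset.sum_congr rfl fun j hj => hoff j (Finset.ne_of_mem_erase hj)

/-- **Hadamard second variation formula.**
If `A(t)` is a twice-differentiable path of Hermitian matrices with twice-differentiable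
eigenvalue paths `λᵢ(t)`, differentiable orthonormal eigenvector paths `vᵢ(t)`, and the
eigenvalues are pairwise distinct at `t₀`, then
`λᵢ''(t₀) = ⟨vᵢ, A'' vᵢ⟩ + 2 Σ_{j≠i} |⟨vⱼ, A' vᵢ⟩|² / (λᵢ − λⱼ)` at `t₀`. -/
theorem stmt_17 {n : ℕ} (hn : 1 ≤ n)
    (A A' A'' : ℝ → Matrix (Fin n) (Fin n) ℂ)
    (hA : ∀ (t : ℝ) (i j : Fin n), HasDerivAt (fun s => A s i j) (A' t i j) t)
    (hA' : ∀ (t : ℝ) (i j : Fin n), HasDerivAt (fun s => A' s i j) (A'' t i j) t)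
    (hherm : ∀ t : ℝ, (A t).IsHermitian)
    (lam lam' lam'' : Fin n → ℝ → ℝ)
    (hlam : ∀ (i : Fin n) (t : ℝ), HasDerivAt (lam i) (lam' i t) t)
    (hlam' : ∀ (i : Fin n) (t : ℝ), HasDerivAt (lam' i) (lam'' i t) t)
    (v : Fin n → ℝ → Fin n → ℂ)
    (hv_diff : ∀ (i k : Fin n), Differentiable ℝ (fun t => v i t k))
    (heig : ∀ (i : Fin n) (t : ℝ), (A t).mulVec (v i t) = ((lam i t : ℝ) : ℂ) • v i t)
    (horth : ∀ (t : ℝ) (i j : Fin n),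
      star (v i t) ⬝ᵥ v j t = if i = j then 1 else 0)
    (t₀ : ℝ) (hdist : ∀ i j : Fin n, i ≠ j → lam i t₀ ≠ lam j t₀) :
    ∀ i : Fin n, ((lam'' i t₀ : ℝ) : ℂ) =
      star (v i t₀) ⬝ᵥ (A'' t₀).mulVec (v i t₀)
        + 2 * ∑ j ∈ Finset.univ.erase i,
            ((‖star (v j t₀) ⬝ᵥ (A' t₀).mulVec (v i t₀)‖ ^ 2
              / (lam i t₀ - lam j t₀) : ℝ) : ℂ) :=
  stmt_17_general A A' A'' hA hA' hherm lam lam' lam'' hlam hlam' v hv_diff heig horth t₀ hdist
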